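/- There exist constants 0 < C₁ ≤ C₂ depending only on q, p, K₁, K₂ such that for every integer m ≥ 0 and every u ∈ (0,1): C₁·q^{min(ℓ_u, m)} ≤ Σ_{ℓ=0}^{m} s_ℓ² q^{ℓ}/(s_ℓ + u)² ≤ C₂·q^{min(ℓ_u, m)}. -/

import Mathlib

/-!
Put `x = p⁻¹`, so that `s_ℓ ≍ x^ℓ` and `x^(ℓ_u+1) ≤ u < x^ℓ_u`. Each term is
`(s_ℓ/(s_ℓ+u))² q^ℓ`. For `ℓ ≤ ℓ_u` we have `u < x^ℓ ≤ s_ℓ/K₁`, so the ratio is bounded below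
by `K₁/(K₁+1)`, and the term at `ℓ = min(ℓ_u, m)` alone gives the lower bound. For the upper
bound, the terms with `ℓ ≤ ℓ_u` are at most `q^ℓ`, a geometric sum dominated by twice its last
term since `q ≥ 2`; beyond `ℓ_u` the ratio is at most `s_ℓ/u ≤ K₂ x^(ℓ-ℓ_u-1)`, and as
`q x² ≤ 1/2` these terms decay geometrically from size `K₂² q · q^ℓ_u`.
-/

open Finset

lemma Real.rpow_neg_natCast_eq_inv_pow {p : ℝ} (hp : 0 ≤ p) (n : ℕ) :
    p ^ (-(n : ℝ)) = p⁻¹ ^ n := by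
  rw [Real.rpow_neg hp, Real.rpow_natCast, inv_pow]

lemma sum_range_succ_pow_le_two_mul_pow {q : ℝ} (hq : 2 ≤ q) (n : ℕ) :
    ∑ ℓ ∈ range (n + 1), q ^ ℓ ≤ 2 * q ^ n := by
  induction n with
  | zero => norm_num
  | succ n ih =>
    rw [sum_range_succ, pow_succ]
    nlinarith [pow_nonneg (by linarith : (0 : ℝ) ≤ q) n]

lemma sum_range_succ_le_of_le_pow_of_geometric_tail {q c : ℝ} {f : ℕ → ℝ} {n : ℕ}
    (hq : 2 ≤ q) (hc : 0 ≤ c) (hf : ∀ ℓ, f ℓ ≤ q ^ ℓ)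
    (htail : ∀ j, f (n + 1 + j) ≤ c * q ^ n * (1 / 2) ^ j) (m : ℕ) :
    ∑ ℓ ∈ range (m + 1), f ℓ ≤ (2 + 2 * c) * q ^ min n m := by
  have hsum_le (k : ℕ) : ∑ ℓ ∈ range (k + 1), f ℓ ≤ 2 * q ^ k :=
    (sum_le_sum fun ℓ _ => hf ℓ).trans (sum_range_succ_pow_le_two_mul_pow hq k)
  have hqn : 0 ≤ c * q ^ n := mul_nonneg hc (pow_nonneg (by linarith) n)
  rcases le_or_gt m n with hmn | hnm
  · rw [min_eq_right hmn]
    nlinarith [hsum_le m, pow_nonneg (by linarith : (0 : ℝ) ≤ q) m]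
  · rw [min_eq_left hnm.le, show m + 1 = (n + 1) + (m - n) by omega, sum_range_add]
    have htail_sum : ∑ j ∈ range (m - n), f (n + 1 + j) ≤ c * q ^ n * 2 :=
      calc ∑ j ∈ range (m - n), f (n + 1 + j)
          ≤ ∑ j ∈ range (m - n), c * q ^ n * (1 / 2) ^ j := sum_le_sum fun j _ => htail j
        _ = c * q ^ n * ∑ j ∈ range (m - n), (1 / 2 : ℝ) ^ j := by rw [mul_sum]
        _ ≤ c * q ^ n * 2 := mul_le_mul_of_nonneg_left (sum_geometric_two_le _) hqn
    linarith [hsum_le n]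

section Ratio

variable {s u Q : ℝ}

lemma sq_mul_div_add_sq_eq : s ^ 2 * Q / (s + u) ^ 2 = (s / (s + u)) ^ 2 * Q := by
  rw [div_pow, mul_div_right_comm]

lemma sq_mul_div_add_sq_le (hs : 0 ≤ s) (hu : 0 ≤ u) (hQ : 0 ≤ Q) :
    s ^ 2 * Q / (s + u) ^ 2 ≤ Q := by
  rw [sq_mul_div_add_sq_eq]
  exact mul_le_of_le_one_left hQ
    (pow_le_one₀ (by positivity) (div_le_one_of_le₀ (by linarith) (by linarith)))

lemma sq_mul_div_add_sq_le_div_sq_mul (hs : 0 ≤ s) (hu : 0 < u) (hQ : 0 ≤ Q) :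
    s ^ 2 * Q / (s + u) ^ 2 ≤ (s / u) ^ 2 * Q := by
  rw [sq_mul_div_add_sq_eq]
  gcongr
  linarith

lemma div_add_one_sq_mul_le_sq_mul_div_add_sq {K : ℝ} (hK : 0 < K) (hu : 0 < u) (hQ : 0 ≤ Q)
    (hKu : K * u ≤ s) : (K / (K + 1)) ^ 2 * Q ≤ s ^ 2 * Q / (s + u) ^ 2 := by
  rw [sq_mul_div_add_sq_eq]
  have hs : 0 ≤ s := le_trans (by positivity) hKu
  have hratio : K / (K + 1) ≤ s / (s + u) := by
    rw [div_le_div_iff₀ (by linarith) (by linarith)]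
    nlinarith
  gcongr

end Ratio

lemma sq_mul_pow_div_add_sq_le_geometric {s u x K q : ℝ} {n j : ℕ} (hx : 0 < x)
    (hs0 : 0 ≤ s) (hs : s ≤ K * x ^ (n + 1 + j)) (hu : x ^ (n + 1) ≤ u) (hq : 0 ≤ q)
    (hqx : q * x ^ 2 ≤ 1 / 2) :
    s ^ 2 * q ^ (n + 1 + j) / (s + u) ^ 2 ≤ K ^ 2 * q * q ^ n * (1 / 2) ^ j := by
  have hu0 : 0 < u := lt_of_lt_of_le (by positivity) hu
  have hK : 0 ≤ K := nonneg_of_mul_nonneg_left (hs0.trans hs) (by positivity)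
  have hratio : s / u ≤ K * x ^ j := by
    rw [div_le_iff₀ hu0]
    calc s ≤ K * x ^ (n + 1 + j) := hs
      _ = K * x ^ j * x ^ (n + 1) := by ring
      _ ≤ K * x ^ j * u := by gcongr
  calc s ^ 2 * q ^ (n + 1 + j) / (s + u) ^ 2
      ≤ (s / u) ^ 2 * q ^ (n + 1 + j) :=
        sq_mul_div_add_sq_le_div_sq_mul hs0 hu0 (by positivity)
    _ ≤ (K * x ^ j) ^ 2 * q ^ (n + 1 + j) := by gcongr
    _ = K ^ 2 * q * q ^ n * (q * x ^ 2) ^ j := by ring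
    _ ≤ K ^ 2 * q * q ^ n * (1 / 2) ^ j := by gcongr

lemma div_add_one_sq_mul_pow_min_le_sum {s : ℕ → ℝ} {K x u q : ℝ} {n : ℕ} (hK : 0 < K)
    (hx0 : 0 ≤ x) (hx1 : x ≤ 1) (hs : ∀ ℓ, K * x ^ ℓ ≤ s ℓ) (hu0 : 0 < u) (hu : u < x ^ n)
    (hq : 0 ≤ q) (m : ℕ) :
    (K / (K + 1)) ^ 2 * q ^ min n m ≤ ∑ ℓ ∈ range (m + 1), s ℓ ^ 2 * q ^ ℓ / (s ℓ + u) ^ 2 := by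
  have hKu : K * u ≤ s (min n m) := calc
    K * u ≤ K * x ^ n := by gcongr
    _ ≤ K * x ^ min n m :=
      mul_le_mul_of_nonneg_left (pow_le_pow_of_le_one hx0 hx1 (min_le_left _ _)) hK.le
    _ ≤ s (min n m) := hs _
  have hs0 (ℓ : ℕ) : 0 ≤ s ℓ := le_trans (by positivity) (hs ℓ)
  calc (K / (K + 1)) ^ 2 * q ^ min n m
      ≤ s (min n m) ^ 2 * q ^ min n m / (s (min n m) + u) ^ 2 :=
        div_add_one_sq_mul_le_sq_mul_div_add_sq hK hu0 (by positivity) hKu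
    _ ≤ _ := single_le_sum (f := fun ℓ => s ℓ ^ 2 * q ^ ℓ / (s ℓ + u) ^ 2)
        (fun ℓ _ => by have := hs0 ℓ; positivity)
        (mem_range.mpr (Nat.lt_succ_of_le (min_le_right _ _)))

theorem D_two_sided_estimate_general
    (q : ℕ) (hq : 2 ≤ q) (p K₁ K₂ : ℝ) (hpq : (q : ℝ) < p)
    (hK₁ : 0 < K₁) :
    ∃ C₁ C₂ : ℝ, 0 < C₁ ∧ C₁ ≤ C₂ ∧
      ∀ s : ℕ → ℝ,
        (∀ ℓ : ℕ, K₁ * p ^ (-(ℓ : ℝ)) ≤ s ℓ ∧ s ℓ ≤ K₂ * p ^ (-(ℓ : ℝ))) →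
        ∀ m : ℕ, ∀ u : ℝ, 0 < u → u < 1 →
        ∀ lu : ℕ, p ^ (-((lu : ℝ) + 1)) ≤ u → u < p ^ (-(lu : ℝ)) →
          C₁ * (q : ℝ) ^ (min lu m)
              ≤ ∑ ℓ ∈ range (m + 1), (s ℓ) ^ 2 * (q : ℝ) ^ ℓ / (s ℓ + u) ^ 2 ∧
          ∑ ℓ ∈ range (m + 1), (s ℓ) ^ 2 * (q : ℝ) ^ ℓ / (s ℓ + u) ^ 2
              ≤ C₂ * (q : ℝ) ^ (min lu m) := by
  have hq2 : (2 : ℝ) ≤ q := by exact_mod_cast hq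
  have hp : 0 < p := by linarith
  have hx : 0 < p⁻¹ := inv_pos.mpr hp
  have hqx : (q : ℝ) * p⁻¹ ^ 2 ≤ 1 / 2 := by
    rw [inv_pow, ← div_eq_mul_inv, div_le_iff₀ (by positivity)]
    nlinarith
  have hC₁ : (K₁ / (K₁ + 1)) ^ 2 ≤ 1 := by
    rw [div_pow, div_le_one (by positivity)]
    nlinarith
  refine ⟨(K₁ / (K₁ + 1)) ^ 2, 2 + 2 * (K₂ ^ 2 * q), by positivity,
    hC₁.trans (by nlinarith [sq_nonneg K₂]), ?_⟩
  intro s hs m u hu0 _ lu hul huu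
  simp only [Real.rpow_neg_natCast_eq_inv_pow hp.le] at hs huu
  rw [show -((lu : ℝ) + 1) = -((lu + 1 : ℕ) : ℝ) by push_cast; ring,
    Real.rpow_neg_natCast_eq_inv_pow hp.le] at hul
  have hs0 (ℓ : ℕ) : 0 ≤ s ℓ := le_trans (by positivity) (hs ℓ).1
  exact ⟨div_add_one_sq_mul_pow_min_le_sum hK₁ hx.le (inv_le_one_of_one_le₀ (by linarith))
      (fun ℓ => (hs ℓ).1) hu0 huu (by positivity) m,
    sum_range_succ_le_of_le_pow_of_geometric_tail hq2 (by positivity)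
      (fun ℓ => sq_mul_div_add_sq_le (hs0 ℓ) hu0.le (by positivity))
      (fun j => sq_mul_pow_div_add_sq_le_geometric hx (hs0 _) (hs _).2 hul (by positivity) hqx) m⟩

/-- Two-sided estimate `D(u) = Σ_{ℓ=0}^m s_ℓ² q^ℓ/(s_ℓ+u)² ≍ q^{min(ℓ_u, m)}` for `u ∈ (0,1)`,
where `p^{-(ℓ_u+1)} ≤ u < p^{-ℓ_u}`, with constants depending only on `q, p, K₁, K₂`. -/
theorem D_two_sided_estimate
    (q : ℕ) (hq : 2 ≤ q) (p K₁ K₂ : ℝ) (hpq : (q : ℝ) < p)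
    (hK₁ : 0 < K₁) (hK₁₂ : K₁ ≤ K₂) :
    ∃ C₁ C₂ : ℝ, 0 < C₁ ∧ C₁ ≤ C₂ ∧
      ∀ s : ℕ → ℝ,
        (∀ ℓ : ℕ, K₁ * p ^ (-(ℓ : ℝ)) ≤ s ℓ ∧ s ℓ ≤ K₂ * p ^ (-(ℓ : ℝ))) →
        ∀ m : ℕ, ∀ u : ℝ, 0 < u → u < 1 →
        ∀ lu : ℕ, p ^ (-((lu : ℝ) + 1)) ≤ u → u < p ^ (-(lu : ℝ)) →
          C₁ * (q : ℝ) ^ (min lu m)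
              ≤ ∑ ℓ ∈ range (m + 1), (s ℓ) ^ 2 * (q : ℝ) ^ ℓ / (s ℓ + u) ^ 2 ∧
          ∑ ℓ ∈ range (m + 1), (s ℓ) ^ 2 * (q : ℝ) ^ ℓ / (s ℓ + u) ^ 2
              ≤ C₂ * (q : ℝ) ^ (min lu m) :=
  D_two_sided_estimate_general q hq p K₁ K₂ hpq hK₁
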